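/- The axiom of ∈-Induction is realized in the implicative model: the fixed-point term h := y(λh.λx.x(λy.hx)) belongs to Σ and satisfies h ≤ ⋀_{α∈W}(ε → φ(α)) for any function φ : W → A, where ε := ⋀_{α∈W}((⋀_{u∈dom(α)}(α(u) → φ(u))) → φ(α)). -/

import Mathlib

universe u v

/-- An implicative algebra: a complete lattice with an implication antitone in the
first argument, monotone in the second, distributing over arbitrary meets in the
second argument, together with a separator `Sep` which is upward closed, closed
under modus ponens, and contains the combinators K and S. -/
structure ImplicativeAlgebra (A : Type u) [CompleteLattice A] where
  imp : A → A → A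
  imp_anti : ∀ ⦃a a' b : A⦄, a ≤ a' → imp a' b ≤ imp a b
  imp_mono : ∀ ⦃a b b' : A⦄, b ≤ b' → imp a b ≤ imp a b'
  imp_sInf : ∀ (a : A) (S : Set A), imp a (sInf S) = ⨅ b ∈ S, imp a b
  Sep : Set A
  sep_upward : ∀ ⦃a b : A⦄, a ∈ Sep → a ≤ b → b ∈ Sep
  sep_mp : ∀ ⦃a b : A⦄, imp a b ∈ Sep → a ∈ Sep → b ∈ Sep
  sep_K : (⨅ a : A, ⨅ b : A, imp a (imp b a)) ∈ Sep
  sep_S : (⨅ a : A, ⨅ b : A, ⨅ c : A,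
      imp (imp a (imp b c)) (imp (imp a b) (imp a c))) ∈ Sep

namespace ImplicativeAlgebra

variable {A : Type u} [CompleteLattice A] (𝔸 : ImplicativeAlgebra A)

/-- Application: `a · b := ⋀ {x | a ≤ b → x}`. -/
def app (a b : A) : A := sInf {x : A | a ≤ 𝔸.imp b x}

/-- Implicative conjunction `a × b`. -/
def itimes (a b : A) : A := ⨅ x : A, 𝔸.imp (𝔸.imp a (𝔸.imp b x)) x

/-- Implicative disjunction `a + b`. -/
def iplus (a b : A) : A := ⨅ x : A, 𝔸.imp (𝔸.imp a x) (𝔸.imp (𝔸.imp b x) x)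

/-- Second-order encoding of the existential quantifier. -/
def iexists {ι : Sort v} (f : ι → A) : A := ⨅ x : A, 𝔸.imp (⨅ i, 𝔸.imp (f i) x) x

/-- Encoding of k = λx.λy.x. -/
def kComb : A := ⨅ a : A, 𝔸.imp a (⨅ b : A, 𝔸.imp b a)

/-- Encoding of λx.λy.y. -/
def kbarComb : A := ⨅ a : A, 𝔸.imp a (⨅ b : A, 𝔸.imp b b)

/-- Encoding of the pairing combinator p = λx.λy.λz.zxy. -/
def pComb : A := ⨅ a : A, 𝔸.imp a (⨅ b : A, 𝔸.imp b (⨅ c : A, 𝔸.imp c (𝔸.app (𝔸.app c a) b)))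

/-- Encoding of the first projection p₁ = λu.u k. -/
def p1Comb : A := ⨅ u : A, 𝔸.imp u (𝔸.app u 𝔸.kComb)

/-- Encoding of the second projection p₂ = λv.v k̄. -/
def p2Comb : A := ⨅ u : A, 𝔸.imp u (𝔸.app u 𝔸.kbarComb)

/-- Encoding of the existential-introduction combinator e = λx.λz.zx. -/
def eComb : A := ⨅ a : A, 𝔸.imp a (⨅ c : A, 𝔸.imp c (𝔸.app c a))

end ImplicativeAlgebra

/-- Names of the implicative model of set theory: a name is a (set-indexed)
family of previously constructed names, each labelled by a truth value in `A`
(a partial function from names to `A`, presented as a family). -/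
inductive Name (A : Type u) : Type (u + 1)
  | mk (ι : Type u) (elem : ι → Name A) (val : ι → A) : Name A

namespace Name

/-- The (index set of the) domain of a name. -/
def idx {A : Type u} : Name A → Type u
  | .mk ι _ _ => ι

/-- The elements of the domain of a name. -/
def elem {A : Type u} : (α : Name A) → α.idx → Name A
  | .mk _ e _ => e

/-- The truth value attached to each element of the domain of a name. -/
def val {A : Type u} : (α : Name A) → α.idx → A
  | .mk _ _ v => v

variable {A : Type u} [CompleteLattice A]

/-- `eqPair 𝔸 α β = (α ⊆_W β, β ⊆_W α)`, defined by simultaneous recursion,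
where `α ⊆_W β := ⋀_{t ∈ dom α}(α(t) → t ∈_W β)` and
`t ∈_W β := ∃_{u ∈ dom β}(β(u) × (u =_W t))` and `u =_W t := (u ⊆_W t) × (t ⊆_W u)`. -/
def eqPair (𝔸 : ImplicativeAlgebra A) : Name A → Name A → A × A
  | .mk _ e v, .mk _ e' v' =>
    (⨅ i, 𝔸.imp (v i) (𝔸.iexists fun j => 𝔸.itimes (v' j)
        (𝔸.itimes (eqPair 𝔸 (e i) (e' j)).2 (eqPair 𝔸 (e i) (e' j)).1)),
     ⨅ j, 𝔸.imp (v' j) (𝔸.iexists fun i => 𝔸.itimes (v i)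
        (𝔸.itimes (eqPair 𝔸 (e i) (e' j)).1 (eqPair 𝔸 (e i) (e' j)).2)))

/-- `α ⊆_W β`. -/
def subW (𝔸 : ImplicativeAlgebra A) (α β : Name A) : A := (eqPair 𝔸 α β).1

/-- `α =_W β := (α ⊆_W β) × (β ⊆_W α)`. -/
def eqW (𝔸 : ImplicativeAlgebra A) (α β : Name A) : A :=
  𝔸.itimes (eqPair 𝔸 α β).1 (eqPair 𝔸 α β).2

/-- `α ∈_W β := ∃_{t ∈ dom β}(β(t) × (t =_W α))`. -/
def memW (𝔸 : ImplicativeAlgebra A) (α β : Name A) : A :=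
  𝔸.iexists fun j : β.idx => 𝔸.itimes (β.val j) (eqW 𝔸 (β.elem j) α)

end Name

/-!
Let `h` be a fixed point of `λh.λx. x (k (h x))`, so that `h ε ≤ ε (k (h ε))` for every `ε`.
We show `h ε ≤ φ(α)` by induction on the name `α`: if `h ε ≤ φ(u)` for all `u ∈ dom α`, then
`k (h ε) ≤ ⋀_{u ∈ dom α}(α(u) → φ(u))`, and `ε` applied to it lies below `φ(α)`.
Finally `h ≤ ε → h ε ≤ ε → φ(α)`.
-/

namespace ImplicativeAlgebra

variable {A : Type u} [CompleteLattice A] (𝔸 : ImplicativeAlgebra A)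

local infixl:100 " ⬝ " => 𝔸.app

theorem app_le_of_le_imp {a b c : A} (h : a ≤ 𝔸.imp b c) : a ⬝ b ≤ c := sInf_le h

theorem le_imp_app (a b : A) : a ≤ 𝔸.imp b (a ⬝ b) := by
  rw [app, 𝔸.imp_sInf]
  exact le_iInf₂ fun _ hx => hx

theorem app_mono {a a' b b' : A} (ha : a ≤ a') (hb : b ≤ b') : a ⬝ b ≤ a' ⬝ b' :=
  𝔸.app_le_of_le_imp (ha.trans ((𝔸.le_imp_app a' b').trans (𝔸.imp_anti hb)))

theorem app_mem_Sep {a b : A} (ha : a ∈ 𝔸.Sep) (hb : b ∈ 𝔸.Sep) : a ⬝ b ∈ 𝔸.Sep :=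
  𝔸.sep_mp (𝔸.sep_upward ha (𝔸.le_imp_app a b)) hb

theorem imp_iInf {ι : Sort*} (a : A) (f : ι → A) :
    𝔸.imp a (⨅ i, f i) = ⨅ i, 𝔸.imp a (f i) := by
  rw [iInf, 𝔸.imp_sInf, iInf_range]

theorem kComb_mem_Sep : 𝔸.kComb ∈ 𝔸.Sep :=
  𝔸.sep_upward 𝔸.sep_K (le_iInf fun a => (iInf_le _ a).trans_eq (𝔸.imp_iInf a _).symm)

theorem app_kComb_le (a : A) : 𝔸.kComb ⬝ a ≤ ⨅ b : A, 𝔸.imp b a :=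
  𝔸.app_le_of_le_imp (iInf_le _ a)

theorem kComb_app_app_le (a b : A) : 𝔸.kComb ⬝ a ⬝ b ≤ a :=
  𝔸.app_le_of_le_imp ((𝔸.app_kComb_le a).trans (iInf_le _ b))

/-- The combinator `s = λx.λy.λz. x z (y z)`. -/
def sComb : A :=
  ⨅ a : A, ⨅ b : A, ⨅ c : A, 𝔸.imp (𝔸.imp a (𝔸.imp b c)) (𝔸.imp (𝔸.imp a b) (𝔸.imp a c))

theorem sComb_mem_Sep : 𝔸.sComb ∈ 𝔸.Sep := 𝔸.sep_S

theorem sComb_app_app_app_le (x y z : A) : 𝔸.sComb ⬝ x ⬝ y ⬝ z ≤ x ⬝ z ⬝ (y ⬝ z) := by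
  set c := x ⬝ z ⬝ (y ⬝ z)
  have hx : x ≤ 𝔸.imp z (𝔸.imp (y ⬝ z) c) :=
    (𝔸.le_imp_app x z).trans (𝔸.imp_mono (𝔸.le_imp_app _ _))
  have hs : 𝔸.sComb ≤
      𝔸.imp (𝔸.imp z (𝔸.imp (y ⬝ z) c)) (𝔸.imp (𝔸.imp z (y ⬝ z)) (𝔸.imp z c)) :=
    (iInf_le _ z).trans ((iInf_le _ (y ⬝ z)).trans (iInf_le _ c))
  have hsx : 𝔸.sComb ⬝ x ≤ 𝔸.imp (𝔸.imp z (y ⬝ z)) (𝔸.imp z c) :=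
    𝔸.app_le_of_le_imp (hs.trans (𝔸.imp_anti hx))
  have hsxy : 𝔸.sComb ⬝ x ⬝ y ≤ 𝔸.imp z c :=
    𝔸.app_le_of_le_imp (hsx.trans (𝔸.imp_anti (𝔸.le_imp_app y z)))
  exact 𝔸.app_le_of_le_imp hsxy

def iComb : A := 𝔸.sComb ⬝ 𝔸.kComb ⬝ 𝔸.kComb

theorem iComb_mem_Sep : 𝔸.iComb ∈ 𝔸.Sep :=
  𝔸.app_mem_Sep (𝔸.app_mem_Sep 𝔸.sComb_mem_Sep 𝔸.kComb_mem_Sep) 𝔸.kComb_mem_Sep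

theorem iComb_app_le (a : A) : 𝔸.iComb ⬝ a ≤ a :=
  (𝔸.sComb_app_app_app_le _ _ a).trans (𝔸.kComb_app_app_le a _)

/-- With `ω = s (k f) (s i i) = λx. f (x x)`, the element `ω ω` reduces to `f (ω ω)`. -/
theorem exists_mem_Sep_le_app_self {f : A} (hf : f ∈ 𝔸.Sep) : ∃ h ∈ 𝔸.Sep, h ≤ f ⬝ h := by
  let ω := 𝔸.sComb ⬝ (𝔸.kComb ⬝ f) ⬝ (𝔸.sComb ⬝ 𝔸.iComb ⬝ 𝔸.iComb)
  have hω : ∀ x, ω ⬝ x ≤ f ⬝ (x ⬝ x) := fun x =>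
    calc ω ⬝ x ≤ 𝔸.kComb ⬝ f ⬝ x ⬝ (𝔸.sComb ⬝ 𝔸.iComb ⬝ 𝔸.iComb ⬝ x) :=
          𝔸.sComb_app_app_app_le _ _ x
      _ ≤ f ⬝ (𝔸.iComb ⬝ x ⬝ (𝔸.iComb ⬝ x)) :=
          𝔸.app_mono (𝔸.kComb_app_app_le f x) (𝔸.sComb_app_app_app_le _ _ x)
      _ ≤ f ⬝ (x ⬝ x) :=
          𝔸.app_mono le_rfl (𝔸.app_mono (𝔸.iComb_app_le x) (𝔸.iComb_app_le x))
  have hSII : 𝔸.sComb ⬝ 𝔸.iComb ⬝ 𝔸.iComb ∈ 𝔸.Sep :=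
    𝔸.app_mem_Sep (𝔸.app_mem_Sep 𝔸.sComb_mem_Sep 𝔸.iComb_mem_Sep) 𝔸.iComb_mem_Sep
  have hωS : ω ∈ 𝔸.Sep :=
    𝔸.app_mem_Sep (𝔸.app_mem_Sep 𝔸.sComb_mem_Sep (𝔸.app_mem_Sep 𝔸.kComb_mem_Sep hf)) hSII
  exact ⟨ω ⬝ ω, 𝔸.app_mem_Sep hωS hωS, hω ω⟩

/-- The combinator `s (k (s i)) (s (k k)) = λg.λx. x (k (g x))`. -/
theorem exists_mem_Sep_app_app_le_app_kComb : ∃ F ∈ 𝔸.Sep, ∀ g x : A,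
    F ⬝ g ⬝ x ≤ x ⬝ (𝔸.kComb ⬝ (g ⬝ x)) := by
  have hK := 𝔸.kComb_mem_Sep
  have hS := 𝔸.sComb_mem_Sep
  refine ⟨𝔸.sComb ⬝ (𝔸.kComb ⬝ (𝔸.sComb ⬝ 𝔸.iComb)) ⬝ (𝔸.sComb ⬝ (𝔸.kComb ⬝ 𝔸.kComb)),
    𝔸.app_mem_Sep (𝔸.app_mem_Sep hS (𝔸.app_mem_Sep hK (𝔸.app_mem_Sep hS 𝔸.iComb_mem_Sep)))
      (𝔸.app_mem_Sep hS (𝔸.app_mem_Sep hK hK)), fun g x => ?_⟩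
  calc _ ≤ 𝔸.kComb ⬝ (𝔸.sComb ⬝ 𝔸.iComb) ⬝ g ⬝ (𝔸.sComb ⬝ (𝔸.kComb ⬝ 𝔸.kComb) ⬝ g) ⬝ x :=
        𝔸.app_mono (𝔸.sComb_app_app_app_le _ _ g) le_rfl
    _ ≤ 𝔸.sComb ⬝ 𝔸.iComb ⬝ (𝔸.sComb ⬝ (𝔸.kComb ⬝ 𝔸.kComb) ⬝ g) ⬝ x :=
        𝔸.app_mono (𝔸.app_mono (𝔸.kComb_app_app_le _ g) le_rfl) le_rfl
    _ ≤ 𝔸.iComb ⬝ x ⬝ (𝔸.sComb ⬝ (𝔸.kComb ⬝ 𝔸.kComb) ⬝ g ⬝ x) :=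
        𝔸.sComb_app_app_app_le _ _ x
    _ ≤ x ⬝ (𝔸.kComb ⬝ 𝔸.kComb ⬝ x ⬝ (g ⬝ x)) :=
        𝔸.app_mono (𝔸.iComb_app_le x) (𝔸.sComb_app_app_app_le _ _ x)
    _ ≤ x ⬝ (𝔸.kComb ⬝ (g ⬝ x)) :=
        𝔸.app_mono le_rfl (𝔸.app_mono (𝔸.kComb_app_app_le _ x) le_rfl)

theorem exists_mem_Sep_app_le_app_kComb :
    ∃ h ∈ 𝔸.Sep, ∀ x : A, h ⬝ x ≤ x ⬝ (𝔸.kComb ⬝ (h ⬝ x)) := by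
  obtain ⟨F, hF, hFle⟩ := 𝔸.exists_mem_Sep_app_app_le_app_kComb
  obtain ⟨h, hh, hfix⟩ := 𝔸.exists_mem_Sep_le_app_self hF
  exact ⟨h, hh, fun x => (𝔸.app_mono hfix le_rfl).trans (hFle h x)⟩

def memInductionPremise (φ : Name A → A) : A :=
  ⨅ β : Name A, 𝔸.imp (⨅ u : β.idx, 𝔸.imp (β.val u) (φ (β.elem u))) (φ β)

theorem app_memInductionPremise_le {h : A}
    (hh : ∀ x : A, h ⬝ x ≤ x ⬝ (𝔸.kComb ⬝ (h ⬝ x))) (φ : Name A → A) (α : Name A) :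
    h ⬝ 𝔸.memInductionPremise φ ≤ φ α := by
  induction α with
  | mk ι e v ih =>
    have hk : 𝔸.kComb ⬝ (h ⬝ 𝔸.memInductionPremise φ) ≤
        ⨅ i : ι, 𝔸.imp (v i) (φ (e i)) :=
      le_iInf fun i => (𝔸.app_kComb_le _).trans ((iInf_le _ (v i)).trans (𝔸.imp_mono (ih i)))
    exact (hh _).trans
      (𝔸.app_le_of_le_imp ((iInf_le _ (Name.mk ι e v)).trans (𝔸.imp_anti hk)))

end ImplicativeAlgebra

/-- the axiom of ∈-induction is realized in the implicative
model: there is h ∈ Σ such that for every φ : W → A,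
h ≤ ⋀_{α∈W}(ε → φ(α)) where ε := ⋀_{α∈W}((⋀_{u∈dom α}(α(u) → φ(u))) → φ(α)). -/
theorem mem_induction_realized {A : Type u} [CompleteLattice A]
    (𝔸 : ImplicativeAlgebra A) :
    ∃ h ∈ 𝔸.Sep, ∀ φ : Name A → A,
      h ≤ ⨅ α : Name A,
        𝔸.imp
          (⨅ β : Name A,
            𝔸.imp (⨅ u : β.idx, 𝔸.imp (β.val u) (φ (β.elem u))) (φ β))
          (φ α) := by
  obtain ⟨h, hSep, hh⟩ := 𝔸.exists_mem_Sep_app_le_app_kComb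
  exact ⟨h, hSep, fun φ => le_iInf fun α =>
    (𝔸.le_imp_app h _).trans (𝔸.imp_mono (𝔸.app_memInductionPremise_le hh φ α))⟩
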